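/- Assume there exist u and i ∈ [N] such that p_u^i ≠ u^i/m, and that X_0^i > 0 for all i ∈ [N]. If the process {x_n} converges almost surely and its limit lies in the zero set Z_P almost surely, then the process {a_n} converges almost surely, its limit lies in Z_P almost surely, and lim_{n→∞} a_n = lim_{n→∞} x_n almost surely. -/

import Mathlib

open MeasureTheory ProbabilityTheory Filter Set

noncomputable section

/-- The vector field `P(y)^i = (1/2) ∑_u (m choose u) y^u (p_u^i − u^i/m)`, where the sum
ranges over all `u : Fin N → ℕ` with `∑ i, u i = m`. -/
def vecFieldP (N m : ℕ) (p : (Fin N → ℕ) → Fin N → ℝ) (y : Fin N → ℝ) : Fin N → ℝ :=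
  fun i => (1 / 2) * ∑ u ∈ Finset.Nat.antidiagonalTuple N m,
    (Nat.multinomial Finset.univ u : ℝ) * (∏ j, y j ^ u j) * (p u i - (u i : ℝ) / m)

/-- The zero set `Z_P = {y ∈ Δ^N : P(y) = 0}` of the vector field on the probability
simplex. -/
def zeroSetVecP (N m : ℕ) (p : (Fin N → ℕ) → Fin N → ℝ) : Set (Fin N → ℝ) :=
  {y ∈ stdSimplex ℝ (Fin N) | vecFieldP N m p y = 0}

/-- The `N`-type preferential attachment process with `m` edges per new node and type
adoption parameters `p u i` (for `u : Fin N → ℕ` with `∑ i, u i = m`), defined on a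
probability space `(Ω, μ)` with filtration `F`.  `A n i` is the number of type-`i` nodes and
`X n i` the sum of the degrees of type-`i` nodes at time `n`; the transition given `F n` is:
a vector `u` is drawn from the `Multinomial(m, x_n)` distribution, an index `i` is drawn from
the distribution `p_u`, and then `A_{n+1} = A_n + δ^i`, `X_{n+1} = X_n + u + m δ^i`. -/
structure NPAProcess (Ω : Type) [MeasurableSpace Ω] where
  μ : Measure Ω
  isProb : IsProbabilityMeasure μ
  N : ℕ
  m : ℕ
  hN : 2 ≤ N
  hm : 1 ≤ m
  p : (Fin N → ℕ) → Fin N → ℝ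
  hp_nonneg : ∀ u ∈ Finset.Nat.antidiagonalTuple N m, ∀ i, 0 ≤ p u i
  hp_sum : ∀ u ∈ Finset.Nat.antidiagonalTuple N m, ∑ i, p u i = 1
  A : ℕ → Ω → Fin N → ℕ
  X : ℕ → Ω → Fin N → ℕ
  F : Filtration ℕ ‹MeasurableSpace Ω›
  A0 : Fin N → ℕ
  X0 : Fin N → ℕ
  hA0 : ∀ ω, A 0 ω = A0
  hX0 : ∀ ω, X 0 ω = X0
  adaptedA : ∀ n, Measurable[F n] (A n)
  adaptedX : ∀ n, Measurable[F n] (X n)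
  hXsum : ∀ n ω, ∑ i, X n ω i = ∑ i, X0 i + 2 * m * n
  step : ∀ n : ℕ, ∀ u ∈ Finset.Nat.antidiagonalTuple N m, ∀ i : Fin N,
    μ[Set.indicator
        {ω | (∀ j, A (n + 1) ω j = A n ω j + if j = i then 1 else 0) ∧
             (∀ j, X (n + 1) ω j = X n ω j + u j + if j = i then m else 0)}
        (fun _ => (1 : ℝ)) | F n]
      =ᵐ[μ] fun ω => (Nat.multinomial Finset.univ u : ℝ) *
        (∏ j, ((X n ω j : ℝ) / ((∑ i', X0 i' : ℕ) + 2 * m * n : ℝ)) ^ u j) * p u i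

namespace NPAProcess

variable {Ω : Type} [MeasurableSpace Ω] (P : NPAProcess Ω)

/-- Total degree `S_n = S_0 + 2mn`. -/
def S (n : ℕ) : ℕ := ∑ i, P.X0 i + 2 * P.m * n

/-- Normalized degree vector `x_n = X_n / S_n`. -/
def x (n : ℕ) (ω : Ω) : Fin P.N → ℝ := fun i => (P.X n ω i : ℝ) / (P.S n : ℝ)

/-- Normalized type-count vector `a_n = A_n / (∑ i, A_0^i + n)`. -/
def a (n : ℕ) (ω : Ω) : Fin P.N → ℝ :=
  fun i => (P.A n ω i : ℝ) / ((∑ i', P.A0 i' : ℕ) + n : ℝ)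

/-- The vector field `P` of the process. -/
def vec : (Fin P.N → ℝ) → Fin P.N → ℝ := vecFieldP P.N P.m P.p

/-- The zero set `Z_P` of the process. -/
def Zp : Set (Fin P.N → ℝ) := zeroSetVecP P.N P.m P.p

end NPAProcess

/-!
Let `D_n^i` be the indicator that the vertex added at step `n` has type `i`. Given `F_n` it has
mean `g_i(x_n)`, where `g(y) = ∑_u (m choose u) y^u p_u` is the type-adoption probability. The
multinomial distribution has mean `m y`, so `P(y) = (g(y) - y) / 2` on the simplex and `g` fixes
every point of `Z_P`. Now `A_n^i = A_0^i + ∑_{k<n} D_k^i`, and `D_k^i - g_i(x_k)` is a bounded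
martingale difference sequence, whose Cesàro means tend to `0` almost surely (the martingale
`∑_k (D_k^i - g_i(x_k)) / (k + 1)` is bounded in `L²`, then Kronecker's lemma). Since
`g_i(x_k) → g_i(L) = L_i`, the Cesàro means of `D_k^i`, hence `a_n^i`, tend to `L_i`.
-/

open scoped Topology

open Finset Polynomial

theorem sum_antidiagonalTuple_multinomial_mul_prod_pow {R : Type*} [CommSemiring R] (N m : ℕ)
    (y : Fin N → R) :
    ∑ u ∈ Nat.antidiagonalTuple N m, (Nat.multinomial univ u : R) * ∏ j, y j ^ u j =
      (∑ j, y j) ^ m := by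
  rw [← piAntidiag_univ_fin_eq_antidiagonalTuple, sum_pow_eq_sum_piAntidiag]

theorem sum_antidiagonalTuple_multinomial_mul_prod_pow_mul_apply {R : Type*} [CommSemiring R]
    (N m : ℕ) (y : Fin N → R) (i : Fin N) :
    ∑ u ∈ Nat.antidiagonalTuple N m, (Nat.multinomial univ u : R) * (∏ j, y j ^ u j) * u i =
      m * y i * (∑ j, y j) ^ (m - 1) := by
  classical
  -- mark the `i`-th variable by `X` and differentiate the expansion of `(∑ j, z j) ^ m` at `X = 1`
  set z : Fin N → R[X] := fun j => C (y j) * if j = i then X else 1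
  have hprod : ∀ u : Fin N → ℕ, ∏ j, z j ^ u j = C (∏ j, y j ^ u j) * X ^ u i := fun u => by
    simp only [z, mul_pow, prod_mul_distrib, ← C_pow, ← map_prod, ite_pow, one_pow,
      prod_ite_eq', Finset.mem_univ, if_true]
  have hz : ∀ j, (z j).eval 1 = y j := fun j => by by_cases hj : j = i <;> simp [z, hj]
  have hz' : ∀ j, (derivative (z j)).eval 1 = if j = i then y i else 0 := fun j => by
    by_cases hj : j = i <;> simp [z, hj]
  have h := congrArg (fun q => (derivative q).eval 1)
    (sum_antidiagonalTuple_multinomial_mul_prod_pow N m z)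
  simp only [hprod, derivative_sum, derivative_mul, derivative_C, derivative_natCast,
    derivative_pow, derivative_X, zero_mul, zero_add, eval_finsetSum, eval_mul, eval_natCast,
    eval_pow, eval_C, eval_X, one_pow, mul_one, hz, hz', sum_ite_eq', Finset.mem_univ,
    if_true] at h
  rw [mul_right_comm, ← h]
  exact sum_congr rfl fun u _ => by ring

/-- Kronecker's lemma, for the weights `k + 1`. -/
theorem tendsto_inv_mul_sum_of_tendsto_sum_inv_succ_mul (b : ℕ → ℝ) {T : ℝ}
    (h : Tendsto (fun n => ∑ k ∈ range n, ((k : ℝ) + 1)⁻¹ * b k) atTop (𝓝 T)) :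
    Tendsto (fun n : ℕ => (n : ℝ)⁻¹ * ∑ k ∈ range n, b k) atTop (𝓝 0) := by
  set B : ℕ → ℝ := fun n => ∑ k ∈ range n, ((k : ℝ) + 1)⁻¹ * b k
  have hAbel : ∀ n : ℕ, ∑ k ∈ range n, b k = n * B n - ∑ k ∈ range n, B k := by
    intro n
    induction n with
    | zero => simp
    | succ n ih =>
      have h0 : (n : ℝ) + 1 ≠ 0 := by positivity
      simp only [sum_range_succ, ih, B]
      push_cast
      field_simp
      ring
  have hlim := h.sub h.cesaro
  rw [sub_self] at hlim
  refine hlim.congr' ?_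
  filter_upwards [eventually_ne_atTop 0] with n hn
  have hn : (n : ℝ) ≠ 0 := Nat.cast_ne_zero.2 hn
  rw [hAbel n]
  field_simp

theorem tendsto_add_sum_div_add_of_tendsto_inv_mul_sum_sub {b c : ℕ → ℝ} {ℓ : ℝ} (a s : ℝ)
    (hbc : Tendsto (fun n : ℕ => (n : ℝ)⁻¹ * ∑ k ∈ range n, (b k - c k)) atTop (𝓝 0))
    (hc : Tendsto c atTop (𝓝 ℓ)) :
    Tendsto (fun n : ℕ => (a + ∑ k ∈ range n, b k) / (s + n)) atTop (𝓝 ℓ) := by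
  have hs : Tendsto (fun n : ℕ => s + n) atTop atTop :=
    tendsto_atTop_add_const_left _ _ tendsto_natCast_atTop_atTop
  have hn : Tendsto (fun n : ℕ => (n : ℝ) / (s + n)) atTop (𝓝 1) := by
    simpa only [add_comm s] using tendsto_natCast_div_add_atTop s
  have h := ((tendsto_const_nhds (x := a)).div_atTop hs).add ((hbc.add hc.cesaro).mul hn)
  rw [zero_add, zero_add, mul_one] at h
  refine h.congr' ?_
  filter_upwards [eventually_gt_atTop 0, hs.eventually_ne_atTop 0] with n hn hsn
  have hn : (n : ℝ) ≠ 0 := by positivity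
  rw [sum_sub_distrib]
  field_simp
  ring

section MartingaleDifference

variable {Ω : Type*} {m0 : MeasurableSpace Ω} {μ : Measure Ω}

theorem integrable_of_abs_le [IsFiniteMeasure μ] {f : Ω → ℝ} {C : ℝ} (hf : StronglyMeasurable f)
    (h : ∀ ω, |f ω| ≤ C) : Integrable f μ :=
  .of_bound hf.aestronglyMeasurable C (ae_of_all _ h)

theorem integrable_sq_of_abs_le [IsFiniteMeasure μ] {f : Ω → ℝ} {C : ℝ}
    (hf : StronglyMeasurable f) (h : ∀ ω, |f ω| ≤ C) : Integrable (fun ω => f ω ^ 2) μ :=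
  integrable_of_abs_le (hf.pow 2) fun ω => by
    rw [abs_pow]; exact pow_le_pow_left₀ (abs_nonneg _) (h ω) 2

theorem integral_mul_eq_zero_of_condExp_eq_zero [IsFiniteMeasure μ] {m : MeasurableSpace Ω}
    (hm : m ≤ m0) {f g : Ω → ℝ} (hf : StronglyMeasurable[m] f) (hfg : Integrable (f * g) μ)
    (hg : Integrable g μ) (hcond : μ[g | m] =ᵐ[μ] 0) :
    ∫ ω, f ω * g ω ∂μ = 0 := by
  have h : μ[f * g | m] =ᵐ[μ] 0 := by
    filter_upwards [condExp_mul_of_stronglyMeasurable_left hf hfg hg, hcond] with ω h1 h2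
    simp [h1, h2]
  calc ∫ ω, f ω * g ω ∂μ = ∫ ω, (μ[f * g | m]) ω ∂μ := (integral_condExp hm).symm
    _ = 0 := by simp [integral_congr_ae h]

variable [IsProbabilityMeasure μ] {F : Filtration ℕ m0}

theorem martingale_sum_range_of_condExp_eq_zero {e : ℕ → Ω → ℝ}
    (hadp : ∀ n, StronglyMeasurable[F (n + 1)] (e n)) (hint : ∀ n, Integrable (e n) μ)
    (hcond : ∀ n, μ[e n | F n] =ᵐ[μ] 0) :
    Martingale (fun n ω => ∑ k ∈ range n, e k ω) F μ := by
  refine martingale_of_condExp_sub_eq_zero_nat (fun n => ?_)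
    (fun n => integrable_finsetSum _ fun k _ => hint k) fun n => ?_
  · exact Finset.stronglyMeasurable_fun_sum _ fun k hk => (hadp k).mono (F.mono (mem_range.1 hk))
  · have : (fun ω => ∑ k ∈ range (n + 1), e k ω) - (fun ω => ∑ k ∈ range n, e k ω) = e n := by
      ext ω; simp [sum_range_succ]
    exact this ▸ hcond n

theorem integral_sq_sum_range_le {e : ℕ → Ω → ℝ} {c : ℕ → ℝ}
    (hadp : ∀ n, StronglyMeasurable[F (n + 1)] (e n)) (hbdd : ∀ n ω, |e n ω| ≤ c n)
    (hcond : ∀ n, μ[e n | F n] =ᵐ[μ] 0) (n : ℕ) :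
    ∫ ω, (∑ k ∈ range n, e k ω) ^ 2 ∂μ ≤ ∑ k ∈ range n, c k ^ 2 := by
  induction n with
  | zero => simp
  | succ n ih =>
    set M : Ω → ℝ := fun ω => ∑ k ∈ range n, e k ω
    have hM_meas : StronglyMeasurable[F n] M :=
      Finset.stronglyMeasurable_fun_sum _ fun k hk => (hadp k).mono (F.mono (mem_range.1 hk))
    have hM_bdd : ∀ ω, |M ω| ≤ ∑ k ∈ range n, c k := fun ω =>
      (abs_sum_le_sum_abs _ _).trans (sum_le_sum fun k _ => hbdd k ω)
    have hM := hM_meas.mono (F.le n)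
    have he := (hadp n).mono (F.le (n + 1))
    have hM2_int : Integrable (fun ω => M ω ^ 2) μ := integrable_sq_of_abs_le hM hM_bdd
    have he2_int : Integrable (fun ω => e n ω ^ 2) μ := integrable_sq_of_abs_le he (hbdd n)
    have hMe_int : Integrable (fun ω => M ω * e n ω) μ := integrable_of_abs_le (hM.mul he)
      fun ω => (abs_mul _ _).trans_le <|
        mul_le_mul (hM_bdd ω) (hbdd n ω) (abs_nonneg _) ((abs_nonneg _).trans (hM_bdd ω))
    have hcross : ∫ ω, M ω * e n ω ∂μ = 0 := integral_mul_eq_zero_of_condExp_eq_zero (F.le n)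
      hM_meas hMe_int (integrable_of_abs_le he (hbdd n)) (hcond n)
    have he2 : ∫ ω, e n ω ^ 2 ∂μ ≤ c n ^ 2 := by
      refine (integral_mono he2_int (integrable_const (c n ^ 2)) fun ω => ?_).trans (by simp)
      simpa only [sq_abs] using pow_le_pow_left₀ (abs_nonneg _) (hbdd n ω) 2
    calc ∫ ω, (∑ k ∈ range (n + 1), e k ω) ^ 2 ∂μ
        = ∫ ω, (M ω ^ 2 + 2 * (M ω * e n ω) + e n ω ^ 2) ∂μ := by
          simp only [sum_range_succ, M]; congr 1; ext ω; ring
      _ = ∫ ω, M ω ^ 2 ∂μ + 2 * ∫ ω, M ω * e n ω ∂μ + ∫ ω, e n ω ^ 2 ∂μ := by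
          rw [integral_add ?_ he2_int, integral_add hM2_int (hMe_int.const_mul 2),
            integral_const_mul]
          exact hM2_int.add (hMe_int.const_mul 2)
      _ ≤ ∑ k ∈ range (n + 1), c k ^ 2 := by rw [hcross, sum_range_succ]; linarith

theorem eLpNorm_one_le_ofReal_one_add_integral_sq {f : Ω → ℝ}
    (hf : Integrable (fun ω => f ω ^ 2) μ) :
    eLpNorm f 1 μ ≤ ENNReal.ofReal (1 + ∫ ω, f ω ^ 2 ∂μ) := by
  have h1f : Integrable (fun ω => 1 + f ω ^ 2) μ := (integrable_const 1).add hf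
  calc eLpNorm f 1 μ ≤ eLpNorm (fun ω => 1 + f ω ^ 2) 1 μ := eLpNorm_mono_real fun ω => by
        rw [Real.norm_eq_abs]; nlinarith [abs_nonneg (f ω), sq_abs (f ω)]
    _ = ENNReal.ofReal (∫ ω, (1 + f ω ^ 2) ∂μ) := by
        rw [eLpNorm_one_eq_lintegral_enorm, ofReal_integral_eq_lintegral_ofReal h1f
          (ae_of_all _ fun ω => by positivity)]
        exact lintegral_congr fun ω => Real.enorm_of_nonneg (by positivity)
    _ = ENNReal.ofReal (1 + ∫ ω, f ω ^ 2 ∂μ) := by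
        rw [integral_add (integrable_const 1) hf]; simp

theorem ae_tendsto_inv_mul_sum_of_condExp_eq_zero {d : ℕ → Ω → ℝ} {C : ℝ}
    (hadp : ∀ n, StronglyMeasurable[F (n + 1)] (d n)) (hbdd : ∀ n ω, |d n ω| ≤ C)
    (hcond : ∀ n, μ[d n | F n] =ᵐ[μ] 0) :
    ∀ᵐ ω ∂μ, Tendsto (fun n : ℕ => (n : ℝ)⁻¹ * ∑ k ∈ range n, d k ω) atTop (𝓝 0) := by
  set e : ℕ → Ω → ℝ := fun k ω => ((k : ℝ) + 1)⁻¹ * d k ω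
  set c : ℕ → ℝ := fun k => ((k : ℝ) + 1)⁻¹ * C
  have he_adp : ∀ n, StronglyMeasurable[F (n + 1)] (e n) := fun n => (hadp n).const_mul _
  have he_bdd : ∀ n ω, |e n ω| ≤ c n := fun n ω => by
    simp only [e, c, abs_mul, abs_inv]
    rw [abs_of_pos (by positivity)]
    exact mul_le_mul_of_nonneg_left (hbdd n ω) (by positivity)
  have he_cond : ∀ n, μ[e n | F n] =ᵐ[μ] 0 := fun n => by
    filter_upwards [condExp_smul ((n : ℝ) + 1)⁻¹ (d n) (F n), hcond n] with ω h1 h2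
    change μ[((n : ℝ) + 1)⁻¹ • d n | F n] ω = 0
    simp [h1, h2]
  have hmart := martingale_sum_range_of_condExp_eq_zero he_adp
    (fun n => integrable_of_abs_le ((he_adp n).mono (F.le _)) (he_bdd n)) he_cond
  have hc2 : Summable fun k => c k ^ 2 := by
    simp only [c, mul_pow, inv_pow]
    refine Summable.mul_right _ ?_
    simpa [one_div] using (summable_nat_add_iff 1).2 (Real.summable_one_div_nat_pow.2 one_lt_two)
  have hL1 : ∀ n, eLpNorm (fun ω => ∑ k ∈ range n, e k ω) 1 μ ≤
      ((1 + ∑' k, c k ^ 2).toNNReal : ENNReal) := fun n => by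
    refine (eLpNorm_one_le_ofReal_one_add_integral_sq (integrable_sq_of_abs_le
      ((hmart.stronglyAdapted n).mono (F.le n)) fun ω =>
        (abs_sum_le_sum_abs _ _).trans (sum_le_sum fun k _ => he_bdd k ω))).trans
      (ENNReal.ofReal_le_ofReal ?_)
    linarith [integral_sq_sum_range_le he_adp he_bdd he_cond n,
      hc2.sum_le_tsum (range n) fun k _ => sq_nonneg (c k)]
  filter_upwards [hmart.submartingale.ae_tendsto_limitProcess hL1] with ω hω
  exact tendsto_inv_mul_sum_of_tendsto_sum_inv_succ_mul (fun k => d k ω) hω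

end MartingaleDifference

/-- The probability `g(y)_i` that a new vertex adopts type `i` when the degree proportions are
`y`: it draws `u ~ Multinomial(m, y)` and then a type from `p u`. -/
def typeProb (N m : ℕ) (p : (Fin N → ℕ) → Fin N → ℝ) (y : Fin N → ℝ) (i : Fin N) : ℝ :=
  ∑ u ∈ Nat.antidiagonalTuple N m, (Nat.multinomial univ u : ℝ) * (∏ j, y j ^ u j) * p u i

section TypeProb

variable {N m : ℕ} {p : (Fin N → ℕ) → Fin N → ℝ}

theorem continuous_typeProb (i : Fin N) : Continuous fun y => typeProb N m p y i := by
  unfold typeProb; fun_prop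

theorem vecFieldP_eq_of_mem_stdSimplex (hm : m ≠ 0) {y : Fin N → ℝ}
    (hy : y ∈ stdSimplex ℝ (Fin N)) (i : Fin N) :
    vecFieldP N m p y i = (typeProb N m p y i - y i) / 2 := by
  have hm : (m : ℝ) ≠ 0 := Nat.cast_ne_zero.2 hm
  have hmean : ∑ u ∈ Nat.antidiagonalTuple N m,
      (Nat.multinomial univ u : ℝ) * (∏ j, y j ^ u j) * ((u i : ℝ) / m) = y i := by
    simp_rw [← mul_div_assoc]
    rw [← sum_div, sum_antidiagonalTuple_multinomial_mul_prod_pow_mul_apply, hy.2, one_pow,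
      mul_one]
    field_simp
  simp only [vecFieldP, typeProb, mul_sub, sum_sub_distrib, hmean]
  ring

theorem typeProb_eq_of_mem_zeroSetVecP (hm : m ≠ 0) {y : Fin N → ℝ}
    (hy : y ∈ zeroSetVecP N m p) (i : Fin N) : typeProb N m p y i = y i := by
  have := vecFieldP_eq_of_mem_stdSimplex (p := p) hm hy.1 i
  rw [hy.2, Pi.zero_apply] at this
  linarith

theorem typeProb_nonneg (hp : ∀ u ∈ Nat.antidiagonalTuple N m, ∀ i, 0 ≤ p u i)
    {y : Fin N → ℝ} (hy : ∀ j, 0 ≤ y j) (i : Fin N) : 0 ≤ typeProb N m p y i :=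
  sum_nonneg fun u hu =>
    mul_nonneg (mul_nonneg (Nat.cast_nonneg _) (prod_nonneg fun j _ => pow_nonneg (hy j) _))
      (hp u hu i)

theorem sum_typeProb (hp : ∀ u ∈ Nat.antidiagonalTuple N m, ∑ i, p u i = 1)
    {y : Fin N → ℝ} (hy : ∑ j, y j = 1) : ∑ i, typeProb N m p y i = 1 := by
  simp only [typeProb]
  rw [sum_comm]
  simp_rw [← mul_sum]
  rw [sum_congr rfl fun u hu => by rw [hp u hu, mul_one],
    sum_antidiagonalTuple_multinomial_mul_prod_pow, hy, one_pow]

theorem typeProb_le_one (hp₀ : ∀ u ∈ Nat.antidiagonalTuple N m, ∀ i, 0 ≤ p u i)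
    (hp₁ : ∀ u ∈ Nat.antidiagonalTuple N m, ∑ i, p u i = 1) {y : Fin N → ℝ}
    (hy : y ∈ stdSimplex ℝ (Fin N)) (i : Fin N) : typeProb N m p y i ≤ 1 :=
  (single_le_sum (fun j _ => typeProb_nonneg hp₀ hy.1 j) (Finset.mem_univ i)).trans_eq
    (sum_typeProb hp₁ hy.2)

end TypeProb

namespace NPAProcess

variable {Ω : Type} [MeasurableSpace Ω] (P : NPAProcess Ω)

instance : IsProbabilityMeasure P.μ := P.isProb

theorem S_pos (hX0 : ∀ i, 0 < P.X0 i) (n : ℕ) : 0 < P.S n := by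
  have : 0 < ∑ i, P.X0 i := sum_pos (fun i _ => hX0 i) ⟨⟨0, by linarith [P.hN]⟩, Finset.mem_univ _⟩
  unfold S; omega

theorem natCast_S (n : ℕ) : (P.S n : ℝ) = ((∑ i, P.X0 i : ℕ) : ℝ) + 2 * P.m * n := by
  simp [S]

theorem x_mem_stdSimplex (hX0 : ∀ i, 0 < P.X0 i) (n : ℕ) (ω : Ω) :
    P.x n ω ∈ stdSimplex ℝ (Fin P.N) := by
  have hS : (P.S n : ℝ) ≠ 0 := Nat.cast_ne_zero.2 (P.S_pos hX0 n).ne'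
  refine ⟨fun j => by unfold x; positivity, ?_⟩
  simp only [x, ← sum_div, div_eq_one_iff_eq hS]
  exact_mod_cast P.hXsum n ω

theorem stronglyMeasurable_typeProb_x (n : ℕ) (i : Fin P.N) :
    StronglyMeasurable[P.F n] fun ω => typeProb P.N P.m P.p (P.x n ω) i := by
  have hx : Measurable[P.F n] (P.x n) := @measurable_pi_lambda _ _ _ (P.F n) _ _ fun j =>
    (measurable_from_top.comp ((measurable_pi_apply j).comp (P.adaptedX n))).div_const _
  exact ((continuous_typeProb i).measurable.comp hx).stronglyMeasurable

/-- The transition at step `n` with edge-type vector `u` and new type `i`, as in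
`NPAProcess.step`. -/
def stepEvent (n : ℕ) (u : Fin P.N → ℕ) (i : Fin P.N) : Set Ω :=
  {ω | (∀ j, P.A (n + 1) ω j = P.A n ω j + if j = i then 1 else 0) ∧
    (∀ j, P.X (n + 1) ω j = P.X n ω j + u j + if j = i then P.m else 0)}

theorem measurableSet_stepEvent (n : ℕ) (u : Fin P.N → ℕ) (i : Fin P.N) :
    MeasurableSet[P.F (n + 1)] (P.stepEvent n u i) := by
  have hA := P.adaptedA (n + 1)
  have hA' := (P.adaptedA n).mono (P.F.mono n.le_succ) le_rfl
  have hX := P.adaptedX (n + 1)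
  have hX' := (P.adaptedX n).mono (P.F.mono n.le_succ) le_rfl
  simp only [stepEvent, Set.ofPred_and, Set.ofPred_forall]
  refine (MeasurableSet.iInter fun j => ?_).inter (MeasurableSet.iInter fun j => ?_)
  · exact measurableSet_eq_fun ((measurable_pi_apply j).comp hA)
      (((measurable_pi_apply j).comp hA').add_const _)
  · exact measurableSet_eq_fun ((measurable_pi_apply j).comp hX)
      ((((measurable_pi_apply j).comp hX').add_const _).add_const _)

theorem eq_of_mem_stepEvent {n : ℕ} {ω : Ω} {u u' : Fin P.N → ℕ} {i i' : Fin P.N}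
    (h : ω ∈ P.stepEvent n u i) (h' : ω ∈ P.stepEvent n u' i') : u = u' ∧ i = i' := by
  have hi : i = i' := by
    by_contra hne
    have := (h.1 i).symm.trans (h'.1 i)
    simp [hne] at this
  subst hi
  refine ⟨funext fun j => ?_, rfl⟩
  have := (h.2 j).symm.trans (h'.2 j)
  omega

/-- The indicator that the vertex added at step `n` has type `i`. -/
def typeInd (n : ℕ) (i : Fin P.N) (ω : Ω) : ℝ :=
  ∑ u ∈ Nat.antidiagonalTuple P.N P.m, (P.stepEvent n u i).indicator (fun _ => 1) ω

theorem typeInd_eq_of_mem_stepEvent {n : ℕ} {ω : Ω} {u : Fin P.N → ℕ} {i : Fin P.N}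
    (hu : u ∈ Nat.antidiagonalTuple P.N P.m) (h : ω ∈ P.stepEvent n u i) (j : Fin P.N) :
    P.typeInd n j ω = if j = i then 1 else 0 := by
  split_ifs with hj
  · subst hj
    rw [typeInd, sum_eq_single_of_mem u hu fun u' _ hu' =>
      Set.indicator_of_notMem (fun h' => hu' (P.eq_of_mem_stepEvent h' h).1) _]
    exact Set.indicator_of_mem h _
  · exact sum_eq_zero fun u' _ =>
      Set.indicator_of_notMem (fun h' => hj (P.eq_of_mem_stepEvent h' h).2) _

theorem typeInd_eq_zero_of_forall_notMem {n : ℕ} {ω : Ω}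
    (h : ∀ u ∈ Nat.antidiagonalTuple P.N P.m, ∀ i, ω ∉ P.stepEvent n u i) (j : Fin P.N) :
    P.typeInd n j ω = 0 :=
  sum_eq_zero fun u hu => Set.indicator_of_notMem (h u hu j) _

theorem typeInd_nonneg (n : ℕ) (i : Fin P.N) (ω : Ω) : 0 ≤ P.typeInd n i ω :=
  sum_nonneg fun _ _ => Set.indicator_nonneg (fun _ _ => zero_le_one) ω

theorem sum_typeInd_le_one (n : ℕ) (ω : Ω) : ∑ i, P.typeInd n i ω ≤ 1 := by
  by_cases h : ∃ u ∈ Nat.antidiagonalTuple P.N P.m, ∃ i, ω ∈ P.stepEvent n u i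
  · obtain ⟨u, hu, i, h⟩ := h
    simp [P.typeInd_eq_of_mem_stepEvent hu h]
  · push Not at h
    simp [P.typeInd_eq_zero_of_forall_notMem h]

theorem typeInd_le_one (n : ℕ) (i : Fin P.N) (ω : Ω) : P.typeInd n i ω ≤ 1 :=
  (single_le_sum (fun j _ => P.typeInd_nonneg n j ω) (Finset.mem_univ i)).trans
    (P.sum_typeInd_le_one n ω)

theorem stronglyMeasurable_typeInd (n : ℕ) (i : Fin P.N) :
    StronglyMeasurable[P.F (n + 1)] (P.typeInd n i) :=
  Finset.stronglyMeasurable_fun_sum _ fun u _ =>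
    stronglyMeasurable_const.indicator (P.measurableSet_stepEvent n u i)

theorem integrable_typeInd (n : ℕ) (i : Fin P.N) : Integrable (P.typeInd n i) P.μ :=
  integrable_of_abs_le ((P.stronglyMeasurable_typeInd n i).mono (P.F.le _)) fun ω =>
    abs_le.2 ⟨by linarith [P.typeInd_nonneg n i ω], P.typeInd_le_one n i ω⟩

theorem A_succ_eq_add_typeInd {n : ℕ} {ω : Ω} (h : ∑ i, P.typeInd n i ω = 1) (i : Fin P.N) :
    (P.A (n + 1) ω i : ℝ) = P.A n ω i + P.typeInd n i ω := by
  by_cases hω : ∃ u ∈ Nat.antidiagonalTuple P.N P.m, ∃ i, ω ∈ P.stepEvent n u i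
  · obtain ⟨u, hu, i₀, hω⟩ := hω
    rw [P.typeInd_eq_of_mem_stepEvent hu hω, hω.1 i]
    split_ifs <;> simp
  · push Not at hω
    simp [P.typeInd_eq_zero_of_forall_notMem hω] at h

theorem condExp_typeInd (n : ℕ) (i : Fin P.N) :
    P.μ[P.typeInd n i | P.F n] =ᵐ[P.μ] fun ω => typeProb P.N P.m P.p (P.x n ω) i := by
  have hint : ∀ u ∈ Nat.antidiagonalTuple P.N P.m,
      Integrable ((P.stepEvent n u i).indicator fun _ => (1 : ℝ)) P.μ := fun u _ =>
    (integrable_const 1).indicator (P.F.le _ _ (P.measurableSet_stepEvent n u i))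
  have hsum : P.typeInd n i =
      ∑ u ∈ Nat.antidiagonalTuple P.N P.m, (P.stepEvent n u i).indicator fun _ => (1 : ℝ) := by
    ext ω; simp [typeInd, Finset.sum_apply]
  rw [hsum]
  filter_upwards [condExp_finsetSum hint (P.F n),
    (eventually_all_finset _).2 fun u hu => P.step n u hu i] with ω h1 h2
  rw [h1, Finset.sum_apply]
  refine (sum_congr rfl h2).trans ?_
  simp only [typeProb, x, natCast_S]

theorem typeProb_x_mem_Icc (hX0 : ∀ i, 0 < P.X0 i) (n : ℕ) (ω : Ω) (i : Fin P.N) :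
    typeProb P.N P.m P.p (P.x n ω) i ∈ Set.Icc 0 1 :=
  ⟨typeProb_nonneg P.hp_nonneg (P.x_mem_stdSimplex hX0 n ω).1 i,
    typeProb_le_one P.hp_nonneg P.hp_sum (P.x_mem_stdSimplex hX0 n ω) i⟩

/-- The events `stepEvent n u i` exhaust `Ω` up to a null set, since their conditional
probabilities sum to `1`. -/
theorem ae_sum_typeInd_eq_one (hX0 : ∀ i, 0 < P.X0 i) :
    ∀ᵐ ω ∂P.μ, ∀ n, ∑ i, P.typeInd n i ω = 1 := by
  refine ae_all_iff.2 fun n => ?_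
  have hcond : P.μ[∑ i, P.typeInd n i | P.F n] =ᵐ[P.μ] fun _ => 1 := by
    filter_upwards [condExp_finsetSum (fun i _ => P.integrable_typeInd n i) (P.F n),
      ae_all_iff.2 fun i => P.condExp_typeInd n i] with ω h1 h2
    rw [h1, Finset.sum_apply, sum_congr rfl fun i _ => h2 i]
    exact sum_typeProb P.hp_sum (P.x_mem_stdSimplex hX0 n ω).2
  have hintegral : ∫ ω, (∑ i, P.typeInd n i) ω ∂P.μ = ∫ _, 1 ∂P.μ := by
    rw [← integral_condExp (P.F.le n), integral_congr_ae hcond]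
  simp only [Finset.sum_apply] at hintegral
  filter_upwards [(integral_eq_iff_of_ae_le
    (integrable_finsetSum univ fun i _ => P.integrable_typeInd n i) (integrable_const 1)
    (ae_of_all _ (P.sum_typeInd_le_one n))).1 hintegral] with ω hω
  exact hω

theorem ae_A_eq_add_sum_typeInd (hX0 : ∀ i, 0 < P.X0 i) :
    ∀ᵐ ω ∂P.μ, ∀ n i, (P.A n ω i : ℝ) = P.A0 i + ∑ k ∈ range n, P.typeInd k i ω := by
  filter_upwards [P.ae_sum_typeInd_eq_one hX0] with ω hω n i
  induction n with
  | zero => simp [P.hA0 ω]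
  | succ n ih => rw [sum_range_succ, P.A_succ_eq_add_typeInd (hω n), ih, add_assoc]

theorem ae_tendsto_inv_mul_sum_typeInd_sub_typeProb (hX0 : ∀ i, 0 < P.X0 i) :
    ∀ᵐ ω ∂P.μ, ∀ i, Tendsto (fun n : ℕ => (n : ℝ)⁻¹ *
      ∑ k ∈ range n, (P.typeInd k i ω - typeProb P.N P.m P.p (P.x k ω) i)) atTop (𝓝 0) := by
  refine ae_all_iff.2 fun i => ae_tendsto_inv_mul_sum_of_condExp_eq_zero (C := 1)
    (fun n => (P.stronglyMeasurable_typeInd n i).sub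
      ((P.stronglyMeasurable_typeProb_x n i).mono (P.F.mono n.le_succ))) (fun n ω => ?_) fun n => ?_
  · exact abs_sub_le_of_nonneg_of_le (P.typeInd_nonneg n i ω) (P.typeInd_le_one n i ω)
      (P.typeProb_x_mem_Icc hX0 n ω i).1 (P.typeProb_x_mem_Icc hX0 n ω i).2
  · have hg : Integrable (fun ω => typeProb P.N P.m P.p (P.x n ω) i) P.μ :=
      integrable_of_abs_le ((P.stronglyMeasurable_typeProb_x n i).mono (P.F.le n)) fun ω =>
        abs_le.2 ⟨by linarith [(P.typeProb_x_mem_Icc hX0 n ω i).1],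
          (P.typeProb_x_mem_Icc hX0 n ω i).2⟩
    filter_upwards [condExp_sub (P.integrable_typeInd n i) hg (P.F n), P.condExp_typeInd n i]
      with ω h1 h2
    refine h1.trans ?_
    rw [Pi.sub_apply, h2, condExp_of_stronglyMeasurable (P.F.le n)
      (P.stronglyMeasurable_typeProb_x n i) hg, sub_self, Pi.zero_apply]

end NPAProcess

theorem Ntype_tendsto_a_of_tendsto_x_general
    {Ω : Type} [MeasurableSpace Ω] (P : NPAProcess Ω)
    (hX0 : ∀ i, 0 < P.X0 i)
    (L : Ω → (Fin P.N → ℝ))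
    (hx : ∀ᵐ ω ∂P.μ, Tendsto (fun n => P.x n ω) atTop (nhds (L ω)))
    (hZ : ∀ᵐ ω ∂P.μ, L ω ∈ P.Zp) :
    (∀ᵐ ω ∂P.μ, Tendsto (fun n => P.a n ω) atTop (nhds (L ω))) ∧
    (∀ᵐ ω ∂P.μ, L ω ∈ P.Zp) := by
  refine ⟨?_, hZ⟩
  filter_upwards [hx, hZ, P.ae_A_eq_add_sum_typeInd hX0,
    P.ae_tendsto_inv_mul_sum_typeInd_sub_typeProb hX0] with ω hxω hZω hAω hDω
  refine tendsto_pi_nhds.2 fun i => ?_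
  have hg : Tendsto (fun k => typeProb P.N P.m P.p (P.x k ω) i) atTop (𝓝 (L ω i)) := by
    rw [← typeProb_eq_of_mem_zeroSetVecP (Nat.pos_iff_ne_zero.1 P.hm) hZω i]
    exact ((continuous_typeProb i).tendsto _).comp hxω
  simp only [NPAProcess.a, hAω]
  exact tendsto_add_sum_div_add_of_tendsto_inv_mul_sum_sub _ _ (hDω i) hg

/-- **N-type reduction from degrees to vertices.** In a nonlinear `N`-type model
(`p_u^i ≠ u^i/m` for some `u, i`) with `X_0^i > 0` for all `i`: if the process `{x_n}`
converges almost surely and its limit lies in the zero set `Z_P` almost surely, then the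
process `{a_n}` converges almost surely, its limit lies in `Z_P` almost surely, and
`lim a_n = lim x_n` almost surely. -/
theorem Ntype_tendsto_a_of_tendsto_x
    {Ω : Type} [MeasurableSpace Ω] (P : NPAProcess Ω)
    (hnonlin : ∃ u ∈ Finset.Nat.antidiagonalTuple P.N P.m, ∃ i, P.p u i ≠ (u i : ℝ) / P.m)
    (hX0 : ∀ i, 0 < P.X0 i)
    (L : Ω → (Fin P.N → ℝ))
    (hx : ∀ᵐ ω ∂P.μ, Tendsto (fun n => P.x n ω) atTop (nhds (L ω)))
    (hZ : ∀ᵐ ω ∂P.μ, L ω ∈ P.Zp) :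
    (∀ᵐ ω ∂P.μ, Tendsto (fun n => P.a n ω) atTop (nhds (L ω))) ∧
    (∀ᵐ ω ∂P.μ, L ω ∈ P.Zp) :=
  Ntype_tendsto_a_of_tendsto_x_general P hX0 L hx hZ
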